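/- arXiv:1401.7066 — 6 statements merged into one kernel-verified Lean document; each statement's English description precedes it below -/
import Mathlib

section
/- Let E : [0,T] → [0,∞) be continuously differentiable with E'(t) = −f(t) for a continuous function f, and suppose that for all ν > 0, (1+ν)∫₀ᵀ E(t) dt ≥ T·E(0) − (βT²/(2ν))·X, where β > 0 and X ≥ 0 is a quantity satisfying X ≤ (K/T²)∫₀ᵀ E(t) dt + (J/T)·E(0) with K, J > 0. Then, setting a = βJ/2, b = βK/2 and choosing ν = a + √(a² + a + b), one obtains ∫₀ᵀ E(t) dt ≥ M·T·E(0) with M = √(a²+a+b) / [ (2a+1)(a + √(a²+a+b)) + a + 2b ] > 0. -/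
/-- the algebraic optimization step of the multi-level energy method:
if `E ≥ 0` is `C¹` with `E' = -f`, and for all `ν > 0`,
`(1+ν)∫₀ᵀE ≥ T·E(0) − (βT²/(2ν))·X`, with `X ≤ (K/T²)∫₀ᵀE + (J/T)E(0)`, then with
`a = βJ/2`, `b = βK/2` and `M = √(a²+a+b)/[(2a+1)(a+√(a²+a+b)) + a + 2b]`, one has
`∫₀ᵀ E ≥ M·T·E(0)` (and `M > 0`). -/
theorem stmt_6 (T β K J X : ℝ) (E f : ℝ → ℝ)
    (hT : 0 < T) (hβ : 0 < β) (hK : 0 < K) (hJ : 0 < J) (hX : 0 ≤ X)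
    (hf : Continuous f) (hE : ∀ t, HasDerivAt E (-(f t)) t)
    (hEnn : ∀ t ∈ Set.Icc 0 T, 0 ≤ E t)
    (h1 : ∀ ν > (0:ℝ), (1 + ν) * ∫ t in (0:ℝ)..T, E t ≥ T * E 0 - (β * T ^ 2 / (2 * ν)) * X)
    (h2 : X ≤ (K / T ^ 2) * (∫ t in (0:ℝ)..T, E t) + (J / T) * E 0) :
    0 < Real.sqrt ((β * J / 2) ^ 2 + β * J / 2 + β * K / 2) /
        ((2 * (β * J / 2) + 1) * (β * J / 2 + Real.sqrt ((β * J / 2) ^ 2 + β * J / 2 + β * K / 2))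
          + β * J / 2 + 2 * (β * K / 2)) ∧
    (∫ t in (0:ℝ)..T, E t) ≥
      (Real.sqrt ((β * J / 2) ^ 2 + β * J / 2 + β * K / 2) /
        ((2 * (β * J / 2) + 1) * (β * J / 2 + Real.sqrt ((β * J / 2) ^ 2 + β * J / 2 + β * K / 2))
          + β * J / 2 + 2 * (β * K / 2))) * T * E 0 := by
  set a := β * J / 2 with ha
  set b := β * K / 2 with hb
  set s := Real.sqrt (a ^ 2 + a + b) with hsdef
  set I := ∫ t in (0:ℝ)..T, E t with hI
  have hapos : 0 < a := by positivity
  have hbpos : 0 < b := by positivity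
  have hs : 0 < s := Real.sqrt_pos.mpr (by positivity)
  have hs2 : s ^ 2 = a ^ 2 + a + b := Real.sq_sqrt (by positivity)
  have hD : 0 < (2 * a + 1) * (a + s) + a + 2 * b := by positivity
  have hIpos : 0 ≤ I := intervalIntegral.integral_nonneg hT.le (fun t ht => hEnn t ht)
  have hE0 : 0 ≤ E 0 := hEnn 0 ⟨le_refl 0, hT.le⟩
  have hν : 0 < a + s := by positivity
  have h := h1 (a + s) hν
  -- clear denominators in h
  have h3 : 2 * (a + s) * ((1 + (a + s)) * I) ≥ 2 * (a + s) * (T * E 0) - β * T ^ 2 * X := by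
    have := mul_le_mul_of_nonneg_left h (by positivity : (0:ℝ) ≤ 2 * (a + s))
    have hne : (2 * (a + s)) ≠ 0 := by positivity
    field_simp at this ⊢
    nlinarith [this]
  have h4 : β * T ^ 2 * X ≤ 2 * b * I + 2 * a * (T * E 0) := by
    have := mul_le_mul_of_nonneg_left h2 (by positivity : (0:ℝ) ≤ β * T ^ 2)
    have hTne : T ≠ 0 := ne_of_gt hT
    calc β * T ^ 2 * X ≤ β * T ^ 2 * ((K / T ^ 2) * I + (J / T) * E 0) := this
      _ = 2 * b * I + 2 * a * (T * E 0) := by field_simp [hb, ha]; ring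
  constructor
  · exact div_pos hs hD
  · rw [ge_iff_le, div_mul_eq_mul_div, div_mul_eq_mul_div, div_le_iff₀ hD]
    have h5 : s ^ 2 * I = (a ^ 2 + a + b) * I := by rw [hs2]
    nlinarith [h3, h4, h5, hIpos, hE0]
end

section
/- Let Ω = (L₁, L₂) be a bounded open interval and A = −d²/dx² with domain D(A) = H²(Ω) ∩ H₀¹(Ω), and let H_k = D(A^{k/2}), so that H₃ = { u ∈ H³(Ω) : u(Lᵢ) = u''(Lᵢ) = 0, i = 1,2 }. Suppose c ∈ W^{3,∞}(Ω) satisfies c'(L₁) = c'(L₂) = 0. Then for every u ∈ H₃, the product cu belongs to H₃, i.e. cu ∈ H³(Ω) and (cu)(Lᵢ) = (cu)''(Lᵢ) = 0 for i = 1,2. -/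
variable {𝕜 : Type*} [NontriviallyNormedField 𝕜]

theorem deriv_deriv_mul {f g : 𝕜 → 𝕜} {x : 𝕜} (hf : Differentiable 𝕜 f) (hg : Differentiable 𝕜 g)
    (hf' : DifferentiableAt 𝕜 (deriv f) x) (hg' : DifferentiableAt 𝕜 (deriv g) x) :
    deriv (deriv fun y => f y * g y) x =
      deriv (deriv f) x * g x + 2 * (deriv f x * deriv g x) + f x * deriv (deriv g) x := by
  have hderiv : deriv (fun y => f y * g y) = fun y => deriv f y * g y + f y * deriv g y :=
    funext fun y => deriv_mul (hf y) (hg y)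
  rw [hderiv, deriv_fun_add (f := fun y => deriv f y * g y) (g := fun y => f y * deriv g y)
    (hf'.mul (hg x)) ((hf x).mul hg'), deriv_fun_mul hf' (hg x), deriv_fun_mul (hf x) hg']
  ring

theorem deriv_deriv_mul_eq_zero {c u : 𝕜 → 𝕜} {x : 𝕜} (hc : ContDiff 𝕜 2 c) (hu : ContDiff 𝕜 2 u)
    (hcx : deriv c x = 0) (hux : u x = 0) (hu''x : deriv (deriv u) x = 0) :
    deriv (deriv fun y => c y * u y) x = 0 := by
  have hc' : ContDiff 𝕜 1 (deriv c) := hc.iterate_deriv' 1 1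
  have hu' : ContDiff 𝕜 1 (deriv u) := hu.iterate_deriv' 1 1
  rw [deriv_deriv_mul (hc.differentiable two_ne_zero) (hu.differentiable two_ne_zero)
    ((hc'.differentiable one_ne_zero) x) ((hu'.differentiable one_ne_zero) x), hcx, hux, hu''x]
  ring

theorem stmt_8_general (L₁ L₂ : ℝ) (c u : ℝ → ℝ)
    (hc : ContDiff ℝ 3 c) (hc1 : deriv c L₁ = 0) (hc2 : deriv c L₂ = 0)
    (hu : ContDiff ℝ 3 u)
    (hu01 : u L₁ = 0) (hu02 : u L₂ = 0)
    (hu21 : deriv (deriv u) L₁ = 0) (hu22 : deriv (deriv u) L₂ = 0) :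
    ContDiff ℝ 3 (fun x => c x * u x) ∧
    c L₁ * u L₁ = 0 ∧ c L₂ * u L₂ = 0 ∧
    deriv (deriv fun x => c x * u x) L₁ = 0 ∧
    deriv (deriv fun x => c x * u x) L₂ = 0 := by
  have hc₂ : ContDiff ℝ 2 c := hc.of_le (by norm_num)
  have hu₂ : ContDiff ℝ 2 u := hu.of_le (by norm_num)
  exact ⟨hc.mul hu, by rw [hu01, mul_zero], by rw [hu02, mul_zero],
    deriv_deriv_mul_eq_zero hc₂ hu₂ hc1 hu01 hu21, deriv_deriv_mul_eq_zero hc₂ hu₂ hc2 hu02 hu22⟩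

/-- one-dimensional compatibility condition, sufficiency:
if `c` is of class `C³` (modelling `W^{3,∞}(L₁,L₂)`) with `c'(L₁) = c'(L₂) = 0`, then
for every `u` in `H₃ = {u ∈ H³ : u = u'' = 0 at the endpoints}` (modelled via `C³`
regularity together with the boundary conditions), the product `cu` again lies in `H₃`. -/
theorem stmt_8 (L₁ L₂ : ℝ) (hL : L₁ < L₂) (c u : ℝ → ℝ)
    (hc : ContDiff ℝ 3 c) (hc1 : deriv c L₁ = 0) (hc2 : deriv c L₂ = 0)
    (hu : ContDiff ℝ 3 u)
    (hu01 : u L₁ = 0) (hu02 : u L₂ = 0)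
    (hu21 : deriv (deriv u) L₁ = 0) (hu22 : deriv (deriv u) L₂ = 0) :
    ContDiff ℝ 3 (fun x => c x * u x) ∧
    c L₁ * u L₁ = 0 ∧ c L₂ * u L₂ = 0 ∧
    deriv (deriv fun x => c x * u x) L₁ = 0 ∧
    deriv (deriv fun x => c x * u x) L₂ = 0 :=
  stmt_8_general L₁ L₂ c u hc hc1 hc2 hu hu01 hu02 hu21 hu22
end

section
/- Let Ω = (L₁, L₂) and H₃ = { u ∈ H³(Ω) : u(Lᵢ) = u''(Lᵢ) = 0 }. If c ∈ W^{3,∞}(Ω) is such that cu ∈ H₃ for every u ∈ H₃, then c'(L₁) = c'(L₂) = 0. (Necessity of the one-dimensional compatibility condition.) -/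
/-!
For `u` vanishing together with `u''` at an endpoint `x₀`, the Leibniz rule collapses to
`(c u)''(x₀) = 2 c'(x₀) u'(x₀)`. Applying the hypothesis to the first Dirichlet
eigenfunction `sin (π (x - L₁) / (L₂ - L₁))`, whose slope `± π / (L₂ - L₁)` at either
endpoint is nonzero, forces `c'(L₁) = c'(L₂) = 0`.
-/

open Real

section Leibniz

variable {𝕜 : Type*} [NontriviallyNormedField 𝕜] {c u : 𝕜 → 𝕜} {x : 𝕜}

theorem deriv_deriv_mul_s9 (hc : Differentiable 𝕜 c) (hu : Differentiable 𝕜 u)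
    (hc' : DifferentiableAt 𝕜 (deriv c) x) (hu' : DifferentiableAt 𝕜 (deriv u) x) :
    deriv (deriv fun y => c y * u y) x =
      deriv (deriv c) x * u x + 2 * deriv c x * deriv u x + c x * deriv (deriv u) x := by
  have hderiv : (deriv fun y => c y * u y) = fun y => deriv c y * u y + c y * deriv u y :=
    funext fun y => deriv_mul (hc y) (hu y)
  rw [hderiv, ((hc'.hasDerivAt.fun_mul (hu x).hasDerivAt).fun_add
    ((hc x).hasDerivAt.fun_mul hu'.hasDerivAt)).deriv]
  ring

theorem deriv_eq_zero_of_deriv_deriv_mul_eq_zero [CharZero 𝕜] (hc : Differentiable 𝕜 c)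
    (hu : Differentiable 𝕜 u) (hc' : DifferentiableAt 𝕜 (deriv c) x)
    (hu' : DifferentiableAt 𝕜 (deriv u) x) (hu₀ : u x = 0) (hu₂ : deriv (deriv u) x = 0)
    (hu₁ : deriv u x ≠ 0) (hcu : deriv (deriv fun y => c y * u y) x = 0) :
    deriv c x = 0 := by
  rw [deriv_deriv_mul_s9 hc hu hc' hu', hu₀, hu₂] at hcu
  simpa [hu₁] using hcu

end Leibniz

section SineMode

variable (k a : ℝ)

theorem hasDerivAt_mul_sub (x : ℝ) : HasDerivAt (fun y => k * (y - a)) k x := by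
  simpa using ((hasDerivAt_id x).sub_const a).const_mul k

theorem hasDerivAt_sin_mul_sub (x : ℝ) :
    HasDerivAt (fun y => sin (k * (y - a))) (k * cos (k * (x - a))) x := by
  simpa [mul_comm] using (hasDerivAt_mul_sub k a x).sin

theorem deriv_sin_mul_sub :
    deriv (fun y => sin (k * (y - a))) = fun x => k * cos (k * (x - a)) :=
  funext fun x => (hasDerivAt_sin_mul_sub k a x).deriv

theorem deriv_deriv_sin_mul_sub (x : ℝ) :
    deriv (deriv fun y => sin (k * (y - a))) x = -k ^ 2 * sin (k * (x - a)) := by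
  rw [deriv_sin_mul_sub, ((hasDerivAt_mul_sub k a x).cos.const_mul k).deriv]
  ring

theorem contDiff_sin_mul_sub {n : WithTop ℕ∞} : ContDiff ℝ n fun y => sin (k * (y - a)) :=
  contDiff_sin.comp (contDiff_const.mul (contDiff_id.sub contDiff_const))

end SineMode

/-- one-dimensional compatibility condition, necessity:
if multiplication by `c` (of class `C³`, modelling `W^{3,∞}`) preserves
`H₃ = {u : u = u'' = 0 at L₁, L₂}`, then `c'(L₁) = c'(L₂) = 0`. -/
theorem stmt_9 (L₁ L₂ : ℝ) (hL : L₁ < L₂) (c : ℝ → ℝ) (hc : ContDiff ℝ 3 c)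
    (h : ∀ u : ℝ → ℝ, ContDiff ℝ 3 u → u L₁ = 0 → u L₂ = 0 →
      deriv (deriv u) L₁ = 0 → deriv (deriv u) L₂ = 0 →
      (ContDiff ℝ 3 (fun x => c x * u x) ∧
        c L₁ * u L₁ = 0 ∧ c L₂ * u L₂ = 0 ∧
        deriv (deriv fun x => c x * u x) L₁ = 0 ∧
        deriv (deriv fun x => c x * u x) L₂ = 0)) :
    deriv c L₁ = 0 ∧ deriv c L₂ = 0 := by
  set k := π / (L₂ - L₁)
  set u : ℝ → ℝ := fun y => sin (k * (y - L₁))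
  have hk : k ≠ 0 := (div_pos pi_pos (sub_pos.mpr hL)).ne'
  have hkL : k * (L₂ - L₁) = π := div_mul_cancel₀ _ (sub_pos.mpr hL).ne'
  have hu : ContDiff ℝ 3 u := contDiff_sin_mul_sub k L₁
  have hu₀₁ : u L₁ = 0 := by simp [u]
  have hu₀₂ : u L₂ = 0 := by simp [u, hkL]
  have hu₂ : ∀ x, u x = 0 → deriv (deriv u) x = 0 := fun x hx => by
    rw [deriv_deriv_sin_mul_sub]; exact mul_eq_zero_of_right _ hx
  have hu₁ : ∀ x, deriv u x = k * cos (k * (x - L₁)) :=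
    fun x => (hasDerivAt_sin_mul_sub k L₁ x).deriv
  obtain ⟨-, -, -, hcu₁, hcu₂⟩ := h u hu hu₀₁ hu₀₂ (hu₂ L₁ hu₀₁) (hu₂ L₂ hu₀₂)
  have hc₁ : Differentiable ℝ c := hc.differentiable (by norm_num)
  have hc₂ : Differentiable ℝ (deriv c) := (hc.of_le (by norm_num)).differentiable_deriv_two
  have hu₁' : Differentiable ℝ u := hu.differentiable (by norm_num)
  have hu₂' : Differentiable ℝ (deriv u) := (hu.of_le (by norm_num)).differentiable_deriv_two
  exact ⟨deriv_eq_zero_of_deriv_deriv_mul_eq_zero hc₁ hu₁' (hc₂ _) (hu₂' _) hu₀₁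
      (hu₂ L₁ hu₀₁) (by simp [hu₁, hk]) hcu₁,
    deriv_eq_zero_of_deriv_deriv_mul_eq_zero hc₁ hu₁' (hc₂ _) (hu₂' _) hu₀₂
      (hu₂ L₂ hu₀₂) (by simp [hu₁, hkL, hk]) hcu₂⟩
end

section
/- Let Ω = B(0,R) ⊂ ℝ² and let c be a smooth function on Ω̄ such that for every u ∈ H⁵(Ω) with u = Δu = Δ²u = 0 on Γ = ∂Ω, the product cu also satisfies cu ∈ H⁵(Ω) with cu = Δ(cu) = Δ²(cu) = 0 on Γ. Then c must be constant on Γ (its tangential derivative ∂c/∂θ vanishes identically on Γ). -/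
open scoped ContDiff

/-- The Laplacian of a function on `ℝ^d`, as the trace of the second derivative. -/
noncomputable def lap {d : ℕ} (u : EuclideanSpace ℝ (Fin d) → ℝ)
    (x : EuclideanSpace ℝ (Fin d)) : ℝ :=
  ∑ i : Fin d, iteratedFDeriv ℝ 2 u x (fun _ => EuclideanSpace.single i (1 : ℝ))

section Infrastructure

abbrev E2 := EuclideanSpace ℝ (Fin 2)

/-- Partial derivative in the `i`-th coordinate direction. -/
noncomputable def pd (i : Fin 2) (f : E2 → ℝ) : E2 → ℝ :=
  fun x => fderiv ℝ f x (EuclideanSpace.single i 1)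

lemma contDiff_pd {f : E2 → ℝ} (hf : ContDiff ℝ ∞ f) (i : Fin 2) : ContDiff ℝ ∞ (pd i f) :=
  (hf.fderiv_right (by simp)).clm_apply contDiff_const

lemma diffAt {f : E2 → ℝ} (hf : ContDiff ℝ ∞ f) (x : E2) : DifferentiableAt ℝ f x :=
  (hf.differentiable (by norm_cast)).differentiableAt

lemma pd_add {f g : E2 → ℝ} (hf : ContDiff ℝ ∞ f) (hg : ContDiff ℝ ∞ g) (i : Fin 2) (x : E2) :
    pd i (fun y => f y + g y) x = pd i f x + pd i g x := by
  unfold pd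
  rw [fderiv_fun_add (diffAt hf x) (diffAt hg x)]
  rfl

lemma pd_mul {f g : E2 → ℝ} (hf : ContDiff ℝ ∞ f) (hg : ContDiff ℝ ∞ g) (i : Fin 2) (x : E2) :
    pd i (fun y => f y * g y) x = f x * pd i g x + g x * pd i f x := by
  unfold pd
  rw [fderiv_fun_mul (diffAt hf x) (diffAt hg x)]
  rfl

lemma pd_const (a : ℝ) (i : Fin 2) (x : E2) : pd i (fun _ => a) x = 0 := by
  unfold pd; rw [fderiv_fun_const]; rfl

lemma pd_const_mul {f : E2 → ℝ} (hf : ContDiff ℝ ∞ f) (a : ℝ) (i : Fin 2) (x : E2) :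
    pd i (fun y => a * f y) x = a * pd i f x := by
  unfold pd; rw [fderiv_const_mul (diffAt hf x)]; rfl

lemma pd_coord (i j : Fin 2) (x : E2) :
    pd i (fun y : E2 => y j) x = if i = j then 1 else 0 := by
  unfold pd
  rw [show (fun y : E2 => y j) = (EuclideanSpace.proj j : E2 →L[ℝ] ℝ) from rfl,
    ContinuousLinearMap.fderiv]
  simp [EuclideanSpace.single_apply, eq_comm]

lemma pd_pd {f : E2 → ℝ} (hf : ContDiff ℝ ∞ f) (i j : Fin 2) (x : E2) :
    pd i (pd j f) x = fderiv ℝ (fderiv ℝ f) x (EuclideanSpace.single i 1)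
      (EuclideanSpace.single j 1) := by
  have hd : DifferentiableAt ℝ (fderiv ℝ f) x :=
    ((hf.fderiv_right (m := ∞) (by simp)).differentiable (by norm_cast)).differentiableAt
  unfold pd
  rw [show (fun y => fderiv ℝ f y (EuclideanSpace.single j 1))
      = (fun y => (fderiv ℝ f y) ((fun _ => EuclideanSpace.single j (1:ℝ)) y)) from rfl,
    fderiv_clm_apply hd (differentiableAt_const _)]
  simp

lemma pd_comm {f : E2 → ℝ} (hf : ContDiff ℝ ∞ f) (i j : Fin 2) (x : E2) :
    pd i (pd j f) x = pd j (pd i f) x := by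
  rw [pd_pd hf, pd_pd hf]
  exact (hf.contDiffAt.isSymmSndFDerivAt (by rw [minSmoothness_of_isRCLikeNormedField]; norm_cast)) _ _

lemma lap_eq {f : E2 → ℝ} (hf : ContDiff ℝ ∞ f) (x : E2) :
    lap f x = pd 0 (pd 0 f) x + pd 1 (pd 1 f) x := by
  rw [pd_pd hf, pd_pd hf]
  unfold lap
  rw [Fin.sum_univ_two, iteratedFDeriv_two_apply, iteratedFDeriv_two_apply]

lemma pd_comp {P P' : ℝ → ℝ} {f : E2 → ℝ} (hP : ∀ t, HasDerivAt P (P' t) t)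
    (hf : ContDiff ℝ ∞ f) (i : Fin 2) (x : E2) :
    pd i (fun y => P (f y)) x = P' (f x) * pd i f x := by
  have h := (hP (f x)).comp_hasFDerivAt x (diffAt hf x).hasFDerivAt
  unfold pd
  rw [show (fun y => P (f y)) = P ∘ f from rfl, h.fderiv]
  rfl

lemma lap_add {f g : E2 → ℝ} (hf : ContDiff ℝ ∞ f) (hg : ContDiff ℝ ∞ g) (x : E2) :
    lap (fun y => f y + g y) x = lap f x + lap g x := by
  have hfg : ContDiff ℝ ∞ (fun y => f y + g y) := hf.add hg
  rw [lap_eq hfg, lap_eq hf, lap_eq hg]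
  have e0 : pd 0 (fun y => f y + g y) = fun y => pd 0 f y + pd 0 g y :=
    funext fun y => pd_add hf hg 0 y
  have e1 : pd 1 (fun y => f y + g y) = fun y => pd 1 f y + pd 1 g y :=
    funext fun y => pd_add hf hg 1 y
  rw [e0, e1, pd_add (contDiff_pd hf 0) (contDiff_pd hg 0),
    pd_add (contDiff_pd hf 1) (contDiff_pd hg 1)]
  ring

lemma lap_const_mul {f : E2 → ℝ} (hf : ContDiff ℝ ∞ f) (a : ℝ) (x : E2) :
    lap (fun y => a * f y) x = a * lap f x := by
  rw [lap_eq (contDiff_const.mul hf), lap_eq hf]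
  have e0 : pd 0 (fun y => a * f y) = fun y => a * pd 0 f y :=
    funext fun y => pd_const_mul hf a 0 y
  have e1 : pd 1 (fun y => a * f y) = fun y => a * pd 1 f y :=
    funext fun y => pd_const_mul hf a 1 y
  rw [e0, e1, pd_const_mul (contDiff_pd hf 0), pd_const_mul (contDiff_pd hf 1)]
  ring

lemma lap_mul {f g : E2 → ℝ} (hf : ContDiff ℝ ∞ f) (hg : ContDiff ℝ ∞ g) (x : E2) :
    lap (fun y => f y * g y) x = lap f x * g x + 2*(pd 0 f x * pd 0 g x)
      + 2*(pd 1 f x * pd 1 g x) + f x * lap g x := by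
  rw [lap_eq (hf.mul hg), lap_eq hf, lap_eq hg]
  have e0 : pd 0 (fun y => f y * g y) = fun y => f y * pd 0 g y + g y * pd 0 f y :=
    funext fun y => pd_mul hf hg 0 y
  have e1 : pd 1 (fun y => f y * g y) = fun y => f y * pd 1 g y + g y * pd 1 f y :=
    funext fun y => pd_mul hf hg 1 y
  rw [e0, e1,
    pd_add (hf.mul (contDiff_pd hg 0)) (hg.mul (contDiff_pd hf 0)),
    pd_add (hf.mul (contDiff_pd hg 1)) (hg.mul (contDiff_pd hf 1)),
    pd_mul hf (contDiff_pd hg 0), pd_mul hg (contDiff_pd hf 0),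
    pd_mul hf (contDiff_pd hg 1), pd_mul hg (contDiff_pd hf 1)]
  ring

lemma lap_pd_comm {f : E2 → ℝ} (hf : ContDiff ℝ ∞ f) (j : Fin 2) (x : E2) :
    lap (pd j f) x = pd j (lap f) x := by
  have e : ∀ i : Fin 2, pd i (pd j f) = pd j (pd i f) :=
    fun i => funext fun y => pd_comm hf i j y
  have elap : lap f = fun y => pd 0 (pd 0 f) y + pd 1 (pd 1 f) y :=
    funext fun y => lap_eq hf y
  rw [lap_eq (contDiff_pd hf j), e 0, e 1,
    pd_comm (contDiff_pd hf 0) 0 j, pd_comm (contDiff_pd hf 1) 1 j, elap,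
    pd_add (contDiff_pd (contDiff_pd hf 0) 0) (contDiff_pd (contDiff_pd hf 1) 1)]

lemma contDiff_lap {f : E2 → ℝ} (hf : ContDiff ℝ ∞ f) : ContDiff ℝ ∞ (lap f) := by
  rw [funext (lap_eq hf)]
  exact (contDiff_pd (contDiff_pd hf 0) 0).add (contDiff_pd (contDiff_pd hf 1) 1)

end Infrastructure

section Polynomials

/-- quartic polynomial -/
def P4 (a0 a1 a2 a3 a4 : ℝ) : ℝ → ℝ := fun t => a0 + a1*t + a2*t^2 + a3*t^3 + a4*t^4

lemma hasDerivAt_P4 (a0 a1 a2 a3 a4 t : ℝ) :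
    HasDerivAt (P4 a0 a1 a2 a3 a4) (P4 a1 (2*a2) (3*a3) (4*a4) 0 t) t := by
  have h1 := hasDerivAt_id t
  have h2 := hasDerivAt_pow 2 t
  have h3 := hasDerivAt_pow 3 t
  have h4 := hasDerivAt_pow 4 t
  have := ((((hasDerivAt_const t a0).add (h1.const_mul a1)).add
    (h2.const_mul a2)).add (h3.const_mul a3)).add (h4.const_mul a4)
  refine this.congr_deriv ?_
  unfold P4; push_cast; ring

lemma contDiff_P4 (a0 a1 a2 a3 a4 : ℝ) : ContDiff ℝ ∞ (P4 a0 a1 a2 a3 a4) := by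
  unfold P4; fun_prop

lemma P4_zero (a0 a1 a2 a3 a4 : ℝ) : P4 a0 a1 a2 a3 a4 0 = a0 := by
  unfold P4; ring

end Polynomials

section Geometry

/-- s = |x|² - R² -/
def sfun (R : ℝ) : E2 → ℝ := fun x => x 0 * x 0 + x 1 * x 1 - R*R

/-- general linear function -/
def wfun (a b : ℝ) : E2 → ℝ := fun x => a * x 0 + b * x 1

noncomputable def tau (a b : ℝ) (j : Fin 2) : ℝ := if j = 0 then a else b

lemma contDiff_coord (j : Fin 2) : ContDiff ℝ ∞ (fun x : E2 => x j) :=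
  (EuclideanSpace.proj (𝕜 := ℝ) j).contDiff

lemma contDiff_sfun (R : ℝ) : ContDiff ℝ ∞ (sfun R) := by
  unfold sfun
  exact (((contDiff_coord 0).mul (contDiff_coord 0)).add
    ((contDiff_coord 1).mul (contDiff_coord 1))).sub contDiff_const

lemma contDiff_wfun (a b : ℝ) : ContDiff ℝ ∞ (wfun a b) := by
  unfold wfun
  exact (contDiff_const.mul (contDiff_coord 0)).add (contDiff_const.mul (contDiff_coord 1))

lemma pd_sfun (R : ℝ) (i : Fin 2) (x : E2) : pd i (sfun R) x = 2 * x i := by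
  unfold sfun
  have h1 : (fun y : E2 => y 0 * y 0 + y 1 * y 1 - R*R)
      = (fun y : E2 => y 0 * y 0 + (y 1 * y 1 + -(R*R))) := by funext y; ring
  rw [h1, pd_add ((contDiff_coord 0).mul (contDiff_coord 0))
      (((contDiff_coord 1).mul (contDiff_coord 1)).add contDiff_const),
    pd_add ((contDiff_coord 1).mul (contDiff_coord 1)) contDiff_const,
    pd_mul (contDiff_coord 0) (contDiff_coord 0),
    pd_mul (contDiff_coord 1) (contDiff_coord 1),
    pd_const, pd_coord, pd_coord]
  fin_cases i <;> simp <;> ring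

lemma pd_wfun (a b : ℝ) (i : Fin 2) (x : E2) :
    pd i (wfun a b) x = if i = 0 then a else b := by
  unfold wfun
  rw [pd_add (contDiff_const.mul (contDiff_coord 0)) (contDiff_const.mul (contDiff_coord 1)),
    pd_const_mul (contDiff_coord 0), pd_const_mul (contDiff_coord 1), pd_coord, pd_coord]
  fin_cases i <;> simp

end Geometry

section Master
variable {R a b : ℝ} {P0 P1 P2 : ℝ → ℝ}
  (hP01 : ∀ t, HasDerivAt P0 (P1 t) t) (hP12 : ∀ t, HasDerivAt P1 (P2 t) t)
  (h0 : ContDiff ℝ ∞ P0) (h1 : ContDiff ℝ ∞ P1)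

include hP01 in
lemma pd_comp_sfun (i : Fin 2) (x : E2) :
    pd i (fun y => P0 (sfun R y)) x = P1 (sfun R x) * (2 * x i) := by
  rw [pd_comp hP01 (contDiff_sfun R), pd_sfun]

include hP01 hP12 h0 h1 in
lemma lap_radial (x : E2) :
    lap (fun y => P0 (sfun R y)) x
      = 4*(sfun R x + R*R) * P2 (sfun R x) + 4 * P1 (sfun R x) := by
  have hs := contDiff_sfun R
  have hc0 : ContDiff ℝ ∞ (fun y => P0 (sfun R y)) := h0.comp hs
  have hc1 : ContDiff ℝ ∞ (fun y => P1 (sfun R y)) := h1.comp hs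
  rw [lap_eq hc0]
  have e : ∀ i : Fin 2, pd i (fun y => P0 (sfun R y))
      = fun y => P1 (sfun R y) * (2 * y i) :=
    fun i => funext fun y => pd_comp_sfun hP01 i y
  have hg : ∀ i : Fin 2, ContDiff ℝ ∞ (fun y : E2 => 2 * y i) :=
    fun i => contDiff_const.mul (contDiff_coord i)
  rw [e 0, e 1, pd_mul hc1 (hg 0), pd_mul hc1 (hg 1),
    pd_comp hP12 hs, pd_comp hP12 hs, pd_sfun, pd_sfun,
    pd_const_mul (contDiff_coord 0), pd_const_mul (contDiff_coord 1),
    pd_coord, pd_coord]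
  simp only [if_pos rfl, reduceIte]
  show P1 (sfun R x) * (2 * 1) + 2 * x 0 * (P2 (sfun R x) * (2 * x 0))
      + (P1 (sfun R x) * (2 * 1) + 2 * x 1 * (P2 (sfun R x) * (2 * x 1))) = _
  have h : x 0 * x 0 + x 1 * x 1 = sfun R x + R*R := by unfold sfun; ring
  linear_combination (4 * P2 (sfun R x)) * h

lemma lap_wfun (x : E2) : lap (wfun a b) x = 0 := by
  rw [lap_eq (contDiff_wfun a b)]
  have e : ∀ i : Fin 2, pd i (wfun a b) = fun _ => tau a b i :=
    fun i => funext fun y => pd_wfun a b i y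
  rw [e 0, e 1, pd_const, pd_const]
  ring

include hP01 h0 in
lemma pd_psw (j : Fin 2) (x : E2) :
    pd j (fun y => P0 (sfun R y) * wfun a b y) x
      = P1 (sfun R x) * ((2 * x j) * wfun a b x) + P0 (sfun R x) * tau a b j := by
  have hs := contDiff_sfun R
  rw [pd_mul (f := fun y => P0 (sfun R y)) (h0.comp hs) (contDiff_wfun a b),
    pd_comp hP01 hs, pd_sfun, pd_wfun]
  unfold tau; ring

include hP01 hP12 h0 h1 in
lemma lap_psw (x : E2) :
    lap (fun y => P0 (sfun R y) * wfun a b y) x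
      = (4*(sfun R x + R*R) * P2 (sfun R x) + 8 * P1 (sfun R x)) * wfun a b x := by
  have hs := contDiff_sfun R
  have hc0 : ContDiff ℝ ∞ (fun y => P0 (sfun R y)) := h0.comp hs
  rw [lap_mul hc0 (contDiff_wfun a b), lap_radial hP01 hP12 h0 h1,
    lap_wfun, pd_comp_sfun hP01, pd_comp_sfun hP01, pd_wfun, pd_wfun]
  show _ * wfun a b x + 2*(_ * a) + 2 * (_ * b) + _ * 0 = _
  unfold wfun; ring

include hP01 h0 h1 in
lemma pd_pd_psw {p : E2} (hsp : sfun R p = 0) (hwp : wfun a b p = 0) (i j : Fin 2) :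
    pd i (pd j (fun y => P0 (sfun R y) * wfun a b y)) p
      = P1 0 * (2 * p j * tau a b i) + P1 0 * (2 * p i * tau a b j) := by
  have hs := contDiff_sfun R
  have e : pd j (fun y => P0 (sfun R y) * wfun a b y)
      = fun y => P1 (sfun R y) * ((2 * y j) * wfun a b y) + P0 (sfun R y) * tau a b j :=
    funext fun y => pd_psw hP01 h0 j y
  have hgj : ContDiff ℝ ∞ (fun y : E2 => (2 * y j) * wfun a b y) :=
    (contDiff_const.mul (contDiff_coord j)).mul (contDiff_wfun a b)
  rw [e, pd_add (f := fun y => P1 (sfun R y) * ((2 * y j) * wfun a b y))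
      (g := fun y => P0 (sfun R y) * tau a b j)
      ((h1.comp hs).mul hgj) ((h0.comp hs).mul contDiff_const),
    pd_mul (f := fun y => P1 (sfun R y)) (h1.comp hs) hgj,
    pd_mul (f := fun y => P0 (sfun R y)) (h0.comp hs) contDiff_const,
    pd_mul (f := fun y : E2 => 2 * y j) (contDiff_const.mul (contDiff_coord j))
      (contDiff_wfun a b),
    pd_comp hP01 hs, pd_sfun, pd_wfun, pd_const,
    pd_const_mul (contDiff_coord j), pd_coord]
  rw [hsp, hwp]
  unfold tau
  fin_cases i <;> fin_cases j <;> simp <;> ring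

end Master

lemma bigexpand {c u : E2 → ℝ} (hc : ContDiff ℝ ∞ c) (hu : ContDiff ℝ ∞ u) (p : E2)
    (hup : u p = 0) (hpdu : ∀ i, pd i u p = 0) (hlapu : lap u p = 0)
    (hpdlapu : ∀ j, pd j (lap u) p = 0) (hlaplapu : lap (lap u) p = 0) :
    lap (lap (fun y => c y * u y)) p
      = 4*(pd 0 (pd 0 c) p * pd 0 (pd 0 u) p + pd 1 (pd 0 c) p * pd 1 (pd 0 u) p
         + pd 0 (pd 1 c) p * pd 0 (pd 1 u) p + pd 1 (pd 1 c) p * pd 1 (pd 1 u) p) := by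
  have hlapc : ContDiff ℝ ∞ (lap c) := contDiff_lap hc
  have hlapu' : ContDiff ℝ ∞ (lap u) := contDiff_lap hu
  have hA : ContDiff ℝ ∞ (fun y => lap c y * u y) := hlapc.mul hu
  have hB : ContDiff ℝ ∞ (fun y => 2*(pd 0 c y * pd 0 u y)) :=
    contDiff_const.mul ((contDiff_pd hc 0).mul (contDiff_pd hu 0))
  have hC : ContDiff ℝ ∞ (fun y => 2*(pd 1 c y * pd 1 u y)) :=
    contDiff_const.mul ((contDiff_pd hc 1).mul (contDiff_pd hu 1))
  have hD : ContDiff ℝ ∞ (fun y => c y * lap u y) := hc.mul hlapu'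
  have e1 : lap (fun y => c y * u y)
      = fun y => lap c y * u y + 2*(pd 0 c y * pd 0 u y) + 2*(pd 1 c y * pd 1 u y)
        + c y * lap u y := funext fun y => lap_mul hc hu y
  rw [e1,
    lap_add (f := fun y => lap c y * u y + 2*(pd 0 c y * pd 0 u y)
      + 2*(pd 1 c y * pd 1 u y)) (g := fun y => c y * lap u y) ((hA.add hB).add hC) hD,
    lap_add (f := fun y => lap c y * u y + 2*(pd 0 c y * pd 0 u y))
      (g := fun y => 2*(pd 1 c y * pd 1 u y)) (hA.add hB) hC,
    lap_add (f := fun y => lap c y * u y) (g := fun y => 2*(pd 0 c y * pd 0 u y)) hA hB,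
    lap_const_mul (f := fun y => pd 0 c y * pd 0 u y)
      ((contDiff_pd hc 0).mul (contDiff_pd hu 0)) 2,
    lap_const_mul (f := fun y => pd 1 c y * pd 1 u y)
      ((contDiff_pd hc 1).mul (contDiff_pd hu 1)) 2,
    lap_mul hlapc hu, lap_mul (contDiff_pd hc 0) (contDiff_pd hu 0),
    lap_mul (contDiff_pd hc 1) (contDiff_pd hu 1), lap_mul hc hlapu']
  rw [hup, hlapu, hlaplapu, hpdu 0, hpdu 1, hpdlapu 0, hpdlapu 1,
    lap_pd_comm hu 0, lap_pd_comm hu 1, hpdlapu 0, hpdlapu 1]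
  ring

section Curve

noncomputable def gam (R θ : ℝ) : E2 :=
  (R * Real.cos θ) • EuclideanSpace.single (0 : Fin 2) (1:ℝ)
    + (R * Real.sin θ) • EuclideanSpace.single (1 : Fin 2) (1:ℝ)

lemma gam_apply0 (R θ : ℝ) : gam R θ 0 = R * Real.cos θ := by
  unfold gam
  simp [EuclideanSpace.single_apply]

lemma gam_apply1 (R θ : ℝ) : gam R θ 1 = R * Real.sin θ := by
  unfold gam
  simp [EuclideanSpace.single_apply]

lemma sphere_coords {R : ℝ} (hR : 0 ≤ R) {x : E2} (hx : x ∈ Metric.sphere (0:E2) R) :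
    x 0 * x 0 + x 1 * x 1 = R * R := by
  have h : ‖x‖ = R := by simpa using hx
  have h2 : ‖x‖ ^ 2 = R ^ 2 := by rw [h]
  rw [EuclideanSpace.norm_eq, Real.sq_sqrt (by positivity)] at h2
  rw [Fin.sum_univ_two] at h2
  simp only [Real.norm_eq_abs, sq_abs] at h2
  nlinarith [h2]

lemma gam_mem {R : ℝ} (hR : 0 < R) (θ : ℝ) : gam R θ ∈ Metric.sphere (0:E2) R := by
  rw [Metric.mem_sphere, dist_zero_right, EuclideanSpace.norm_eq, Fin.sum_univ_two]
  rw [gam_apply0, gam_apply1]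
  simp only [Real.norm_eq_abs, sq_abs]
  rw [show (R * Real.cos θ)^2 + (R * Real.sin θ)^2 = R^2 by
    have := Real.sin_sq_add_cos_sq θ; linear_combination R^2 * this]
  exact Real.sqrt_sq hR.le

lemma hasDerivAt_gam (R θ : ℝ) :
    HasDerivAt (gam R) ((-(R * Real.sin θ)) • EuclideanSpace.single (0 : Fin 2) (1:ℝ)
      + (R * Real.cos θ) • EuclideanSpace.single (1 : Fin 2) (1:ℝ)) θ := by
  unfold gam
  have h0 : HasDerivAt (fun θ : ℝ => R * Real.cos θ) (-(R * Real.sin θ)) θ := by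
    simpa [mul_comm, neg_mul, mul_neg] using ((Real.hasDerivAt_cos θ).const_mul R)
  have h1 : HasDerivAt (fun θ : ℝ => R * Real.sin θ) (R * Real.cos θ) θ := by
    simpa [mul_comm] using ((Real.hasDerivAt_sin θ).const_mul R)
  exact (h0.smul_const _).add (h1.smul_const _)

lemma deriv_along {f : E2 → ℝ} (hf : ContDiff ℝ ∞ f) (R θ : ℝ) :
    HasDerivAt (fun t => f (gam R t))
      ((-(R * Real.sin θ)) * pd 0 f (gam R θ) + (R * Real.cos θ) * pd 1 f (gam R θ)) θ := by
  have h := (diffAt hf (gam R θ)).hasFDerivAt.comp_hasDerivAt θ (hasDerivAt_gam R θ)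
  refine h.congr_deriv ?_
  rw [map_add, map_smul, map_smul]
  unfold pd
  simp [smul_eq_mul]

lemma gam_surj {R : ℝ} (hR : 0 < R) {x : E2} (hx : x ∈ Metric.sphere (0:E2) R) :
    ∃ θ, gam R θ = x := by
  set z : ℂ := ⟨x 0, x 1⟩ with hz
  have hxx := sphere_coords hR.le hx
  have habs : ‖z‖ = R := by
    rw [Complex.norm_def, Complex.normSq_mk]
    rw [show x 0 * x 0 + x 1 * x 1 = R * R from hxx, show R * R = R^2 by ring]
    exact Real.sqrt_sq hR.le
  have hz0 : z ≠ 0 := by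
    intro h
    rw [h] at habs
    simp at habs
    exact hR.ne' habs.symm
  refine ⟨Complex.arg z, ?_⟩
  have hcos : Real.cos (Complex.arg z) = x 0 / R := by
    rw [Complex.cos_arg hz0, habs]
  have hsin : Real.sin (Complex.arg z) = x 1 / R := by
    rw [Complex.sin_arg, habs]
  ext j
  fin_cases j
  · show gam R (Complex.arg z) 0 = x 0
    rw [gam_apply0, hcos]
    field_simp
  · show gam R (Complex.arg z) 1 = x 1
    rw [gam_apply1, hsin]
    field_simp

end Curve

section TestPolys
variable (R : ℝ)

noncomputable def F0 : ℝ → ℝ := P4 0 (12*R^4) (-6*R^2) 1 0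
noncomputable def F1 : ℝ → ℝ := P4 (12*R^4) (-12*R^2) 3 0 0
noncomputable def F2 : ℝ → ℝ := P4 (-12*R^2) 6 0 0 0
noncomputable def K0 : ℝ → ℝ := P4 0 (-72*R^2) 36 0 0
noncomputable def K1 : ℝ → ℝ := P4 (-72*R^2) 72 0 0 0
noncomputable def K2 : ℝ → ℝ := P4 (72 + 0*R) 0 0 0 0
noncomputable def G0 : ℝ → ℝ := P4 0 (2*R^6) (-2*R^4) 0 1
noncomputable def G1 : ℝ → ℝ := P4 (2*R^6) (-4*R^4) 0 4 0
noncomputable def G2 : ℝ → ℝ := P4 (-4*R^4) 0 12 0 0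
noncomputable def Hh0 : ℝ → ℝ := P4 0 (-48*R^4) (48*R^2) 80 0
noncomputable def Hh1 : ℝ → ℝ := P4 (-48*R^4) (96*R^2) 240 0 0
noncomputable def Hh2 : ℝ → ℝ := P4 (96*R^2) 480 0 0 0

lemma hF01 : ∀ t, HasDerivAt (F0 R) (F1 R t) t := by
  intro t
  refine (hasDerivAt_P4 0 (12*R^4) (-6*R^2) 1 0 t).congr_deriv ?_
  unfold F1 P4; ring

lemma hF12 : ∀ t, HasDerivAt (F1 R) (F2 R t) t := by
  intro t
  refine (hasDerivAt_P4 (12*R^4) (-12*R^2) 3 0 0 t).congr_deriv ?_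
  unfold F2 P4; ring

lemma hK01 : ∀ t, HasDerivAt (K0 R) (K1 R t) t := by
  intro t
  refine (hasDerivAt_P4 0 (-72*R^2) 36 0 0 t).congr_deriv ?_
  unfold K1 P4; ring

lemma hK12 : ∀ t, HasDerivAt (K1 R) (K2 R t) t := by
  intro t
  refine (hasDerivAt_P4 (-72*R^2) 72 0 0 0 t).congr_deriv ?_
  unfold K2 P4; ring

lemma hG01 : ∀ t, HasDerivAt (G0 R) (G1 R t) t := by
  intro t
  refine (hasDerivAt_P4 0 (2*R^6) (-2*R^4) 0 1 t).congr_deriv ?_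
  unfold G1 P4; ring

lemma hG12 : ∀ t, HasDerivAt (G1 R) (G2 R t) t := by
  intro t
  refine (hasDerivAt_P4 (2*R^6) (-4*R^4) 0 4 0 t).congr_deriv ?_
  unfold G2 P4; ring

lemma hH01 : ∀ t, HasDerivAt (Hh0 R) (Hh1 R t) t := by
  intro t
  refine (hasDerivAt_P4 0 (-48*R^4) (48*R^2) 80 0 t).congr_deriv ?_
  unfold Hh1 P4; ring

lemma hH12 : ∀ t, HasDerivAt (Hh1 R) (Hh2 R t) t := by
  intro t
  refine (hasDerivAt_P4 (-48*R^4) (96*R^2) 240 0 0 t).congr_deriv ?_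
  unfold Hh2 P4; ring

lemma hF0c : ContDiff ℝ ∞ (F0 R) := contDiff_P4 _ _ _ _ _
lemma hF1c : ContDiff ℝ ∞ (F1 R) := contDiff_P4 _ _ _ _ _
lemma hK0c : ContDiff ℝ ∞ (K0 R) := contDiff_P4 _ _ _ _ _
lemma hK1c : ContDiff ℝ ∞ (K1 R) := contDiff_P4 _ _ _ _ _
lemma hG0c : ContDiff ℝ ∞ (G0 R) := contDiff_P4 _ _ _ _ _
lemma hG1c : ContDiff ℝ ∞ (G1 R) := contDiff_P4 _ _ _ _ _
lemma hH0c : ContDiff ℝ ∞ (Hh0 R) := contDiff_P4 _ _ _ _ _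
lemma hH1c : ContDiff ℝ ∞ (Hh1 R) := contDiff_P4 _ _ _ _ _

lemma F0_zero : F0 R 0 = 0 := P4_zero _ _ _ _ _
lemma F1_zero : F1 R 0 = 12*R^4 := P4_zero _ _ _ _ _
lemma F2_zero : F2 R 0 = -12*R^2 := P4_zero _ _ _ _ _
lemma K1_zero : K1 R 0 = -72*R^2 := P4_zero _ _ _ _ _
lemma K2_zero : K2 R 0 = 72 + 0*R := P4_zero _ _ _ _ _
lemma G0_zero : G0 R 0 = 0 := P4_zero _ _ _ _ _
lemma G1_zero : G1 R 0 = 2*R^6 := P4_zero _ _ _ _ _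
lemma G2_zero : G2 R 0 = -4*R^4 := P4_zero _ _ _ _ _
lemma Hh0_zero : Hh0 R 0 = 0 := P4_zero _ _ _ _ _
lemma Hh1_zero : Hh1 R 0 = -48*R^4 := P4_zero _ _ _ _ _
lemma Hh2_zero : Hh2 R 0 = 96*R^2 := P4_zero _ _ _ _ _

end TestPolys

/-- necessity of the higher-order compatibility condition on a disk:
if `c` is smooth on the disk `B(0,R) ⊂ ℝ²` and multiplication by `c` preserves the class
of `H⁵`-functions (modelled by `C⁵` regularity) with `u = Δu = Δ²u = 0` on the boundary
circle `Γ`, then `c` is constant on `Γ`. -/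
theorem stmt_12 (R : ℝ) (hR : 0 < R) (c : EuclideanSpace ℝ (Fin 2) → ℝ)
    (hc : ContDiff ℝ (⊤ : ℕ∞) c)
    (h : ∀ u : EuclideanSpace ℝ (Fin 2) → ℝ, ContDiff ℝ 5 u →
      (∀ x ∈ Metric.sphere (0 : EuclideanSpace ℝ (Fin 2)) R, u x = 0) →
      (∀ x ∈ Metric.sphere (0 : EuclideanSpace ℝ (Fin 2)) R, lap u x = 0) →
      (∀ x ∈ Metric.sphere (0 : EuclideanSpace ℝ (Fin 2)) R, lap (lap u) x = 0) →
      (ContDiff ℝ 5 (fun y => c y * u y) ∧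
        (∀ x ∈ Metric.sphere (0 : EuclideanSpace ℝ (Fin 2)) R, c x * u x = 0) ∧
        (∀ x ∈ Metric.sphere (0 : EuclideanSpace ℝ (Fin 2)) R,
          lap (fun y => c y * u y) x = 0) ∧
        (∀ x ∈ Metric.sphere (0 : EuclideanSpace ℝ (Fin 2)) R,
          lap (lap (fun y => c y * u y)) x = 0))) :
    ∀ x ∈ Metric.sphere (0 : EuclideanSpace ℝ (Fin 2)) R,
      ∀ y ∈ Metric.sphere (0 : EuclideanSpace ℝ (Fin 2)) R, c x = c y := by
  have hc8 : ContDiff ℝ ∞ c := hc.of_le (by simp)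
  have h5 : (5 : WithTop ℕ∞) ≤ ∞ := by norm_cast
  have hsz : ∀ z ∈ Metric.sphere (0:E2) R, sfun R z = 0 := by
    intro z hz
    have := sphere_coords hR.le hz
    unfold sfun; linarith
  -- Step 1 : the radial derivative of c vanishes on the circle
  have step1 : ∀ z ∈ Metric.sphere (0:E2) R, z 0 * pd 0 c z + z 1 * pd 1 c z = 0 := by
    have hcd : ContDiff ℝ ∞ (fun y => F0 R (sfun R y)) := (hF0c R).comp (contDiff_sfun R)
    obtain ⟨-, -, h3, -⟩ := h (fun y => F0 R (sfun R y)) (hcd.of_le h5)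
      (fun z hz => by show F0 R (sfun R z) = 0; rw [hsz z hz, F0_zero])
      (fun z hz => by
        rw [lap_radial (hF01 R) (hF12 R) (hF0c R) (hF1c R) z, hsz z hz, F1_zero, F2_zero]
        ring)
      (fun z hz => by
        have efun : lap (fun y => F0 R (sfun R y)) = fun y => K0 R (sfun R y) :=
          funext fun y => by
            rw [lap_radial (hF01 R) (hF12 R) (hF0c R) (hF1c R) y]
            unfold K0 F1 F2 P4; ring
        rw [efun, lap_radial (hK01 R) (hK12 R) (hK0c R) (hK1c R) z, hsz z hz,
          K1_zero, K2_zero]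
        ring)
    intro z hz
    have h0 := h3 z hz
    rw [lap_mul hc8 hcd z, pd_comp_sfun (hF01 R) 0 z, pd_comp_sfun (hF01 R) 1 z,
      lap_radial (hF01 R) (hF12 R) (hF0c R) (hF1c R) z] at h0
    beta_reduce at h0
    rw [hsz z hz, F0_zero, F1_zero, F2_zero] at h0
    have h48 : (48*R^4) ≠ 0 := by positivity
    have : (48*R^4) * (z 0 * pd 0 c z + z 1 * pd 1 c z) = 0 := by linear_combination h0
    exact (mul_eq_zero.mp this).resolve_left h48
  -- Step 2 : the tangential derivative of c vanishes on the circle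
  have step2 : ∀ θ : ℝ, (-(R * Real.sin θ)) * pd 0 c (gam R θ) +
      (R * Real.cos θ) * pd 1 c (gam R θ) = 0 := by
    intro θ
    have hp : gam R θ ∈ Metric.sphere (0:E2) R := gam_mem hR θ
    have hsp : sfun R (gam R θ) = 0 := hsz _ hp
    set p : E2 := gam R θ with hpdef
    set aa : ℝ := -(p 1) with haa
    set bb : ℝ := p 0 with hbb
    have hwp : wfun aa bb p = 0 := by unfold wfun; rw [haa, hbb]; ring
    have hGc : ContDiff ℝ ∞ (fun y => G0 R (sfun R y) * wfun aa bb y) :=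
      ((hG0c R).comp (contDiff_sfun R)).mul (contDiff_wfun aa bb)
    have hlapufun : lap (fun y => G0 R (sfun R y) * wfun aa bb y)
        = fun z => Hh0 R (sfun R z) * wfun aa bb z :=
      funext fun z => by
        rw [lap_psw (hG01 R) (hG12 R) (hG0c R) (hG1c R) z]
        unfold Hh0 G1 G2 P4; ring
    obtain ⟨-, -, -, h4⟩ := h (fun y => G0 R (sfun R y) * wfun aa bb y) (hGc.of_le h5)
      (fun z hz => by
        show G0 R (sfun R z) * wfun aa bb z = 0
        rw [hsz z hz, G0_zero]; ring)
      (fun z hz => by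
        rw [lap_psw (hG01 R) (hG12 R) (hG0c R) (hG1c R) z, hsz z hz, G1_zero, G2_zero]
        ring)
      (fun z hz => by
        rw [hlapufun, lap_psw (hH01 R) (hH12 R) (hH0c R) (hH1c R) z, hsz z hz,
          Hh1_zero, Hh2_zero]
        ring)
    have hmain := h4 p hp
    -- values of u and its derivatives at p
    have hup : (fun y => G0 R (sfun R y) * wfun aa bb y) p = 0 := by
      show G0 R (sfun R p) * wfun aa bb p = 0
      rw [hwp]; ring
    have hpdu : ∀ i, pd i (fun y => G0 R (sfun R y) * wfun aa bb y) p = 0 := by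
      intro i
      rw [pd_psw (hG01 R) (hG0c R) i p, hsp, hwp, G0_zero]
      ring
    have hlapup : lap (fun y => G0 R (sfun R y) * wfun aa bb y) p = 0 := by
      rw [hlapufun]
      show Hh0 R (sfun R p) * wfun aa bb p = 0
      rw [hwp]; ring
    have hpdlapu : ∀ j, pd j (lap (fun y => G0 R (sfun R y) * wfun aa bb y)) p = 0 := by
      intro j
      rw [hlapufun, pd_psw (hH01 R) (hH0c R) j p, hsp, hwp, Hh0_zero]
      ring
    have hlaplapup : lap (lap (fun y => G0 R (sfun R y) * wfun aa bb y)) p = 0 := by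
      rw [hlapufun, lap_psw (hH01 R) (hH12 R) (hH0c R) (hH1c R) p, hsp, hwp]
      ring
    rw [bigexpand hc8 hGc p hup hpdu hlapup hpdlapu hlaplapup,
      pd_pd_psw (hG01 R) (hG0c R) (hG1c R) hsp hwp 0 0,
      pd_pd_psw (hG01 R) (hG0c R) (hG1c R) hsp hwp 1 0,
      pd_pd_psw (hG01 R) (hG0c R) (hG1c R) hsp hwp 0 1,
      pd_pd_psw (hG01 R) (hG0c R) (hG1c R) hsp hwp 1 1, G1_zero] at hmain
    unfold tau at hmain
    norm_num at hmain
    -- the eta relation from step 1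
    have hN : ContDiff ℝ ∞ (fun z : E2 => z 0 * pd 0 c z + z 1 * pd 1 c z) :=
      ((contDiff_coord 0).mul (contDiff_pd hc8 0)).add
        ((contDiff_coord 1).mul (contDiff_pd hc8 1))
    have heta0 : (fun t => (fun z : E2 => z 0 * pd 0 c z + z 1 * pd 1 c z) (gam R t))
        = fun _ => (0:ℝ) := funext fun t => step1 _ (gam_mem hR t)
    have hder := deriv_along hN R θ
    rw [heta0] at hder
    have heta := hder.unique (hasDerivAt_const θ 0)
    have epdN : ∀ j : Fin 2, pd j (fun z : E2 => z 0 * pd 0 c z + z 1 * pd 1 c z) p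
        = ((if j = 0 then 1 else 0) * pd 0 c p + p 0 * pd j (pd 0 c) p)
        + ((if j = 1 then 1 else 0) * pd 1 c p + p 1 * pd j (pd 1 c) p) := by
      intro j
      rw [pd_add (f := fun z : E2 => z 0 * pd 0 c z) (g := fun z : E2 => z 1 * pd 1 c z)
          ((contDiff_coord 0).mul (contDiff_pd hc8 0))
          ((contDiff_coord 1).mul (contDiff_pd hc8 1)) j p,
        pd_mul (f := fun z : E2 => z 0) (contDiff_coord 0) (contDiff_pd hc8 0) j p,
        pd_mul (f := fun z : E2 => z 1) (contDiff_coord 1) (contDiff_pd hc8 1) j p,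
        pd_coord, pd_coord]
      ring
    rw [← hpdef] at heta
    rw [epdN 0, epdN 1] at heta
    norm_num at heta
    -- symmetry of second derivatives
    have hsym : pd 0 (pd 1 c) p = pd 1 (pd 0 c) p := pd_comm hc8 0 1 p
    rw [hsym] at heta hmain
    -- coordinates of p
    have hp0 : p 0 = R * Real.cos θ := by rw [hpdef]; exact gam_apply0 R θ
    have hp1 : p 1 = R * Real.sin θ := by rw [hpdef]; exact gam_apply1 R θ
    rw [← hp0, ← hp1] at heta
    rw [haa, hbb] at hmain
    rw [show -(R * Real.sin θ) = -(p 1) by rw [hp1], show R * Real.cos θ = p 0 by rw [hp0]]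
    have h8 : (8:ℝ)*R^6 ≠ 0 := by positivity
    have hS : -(p 0 * p 1) * pd 0 (pd 0 c) p + (p 0^2 - p 1^2) * pd 1 (pd 0 c) p
        + p 0 * p 1 * pd 1 (pd 1 c) p = 0 := by
      apply mul_left_cancel₀ h8
      rw [mul_zero]
      linear_combination hmain
    linear_combination heta - hS
  -- conclusion : c is constant along the circle
  have hphi : ∀ t : ℝ, HasDerivAt (fun t' => c (gam R t')) 0 t := by
    intro t
    have hder := deriv_along hc8 R t
    rw [step2 t] at hder
    exact hder
  have hconst : ∀ t t' : ℝ, c (gam R t) = c (gam R t') := by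
    have hdiff : Differentiable ℝ (fun t' => c (gam R t')) := fun t => (hphi t).differentiableAt
    intro t t'
    exact is_const_of_deriv_eq_zero hdiff (fun s => (hphi s).deriv) t t'
  intro x hx y hy
  obtain ⟨θx, hθx⟩ := gam_surj hR hx
  obtain ⟨θy, hθy⟩ := gam_surj hR hy
  rw [← hθx, ← hθy]
  exact hconst θx θy
end

section
/- Let H be a Hilbert space and A self-adjoint coercive with energies e_k. Let C₂₁ be bounded on H and let (w₁, w₂) solve the 2-coupled cascade system w₁'' + A w₁ = 0, w₂'' + A w₂ + C₂₁ w₁ = 0 with data in H₀ × H₋₁ × H₁ × H₀ (i.e. W = (w₁,w₂,w₁',w₂') with e₋₁(W₁), e₀(W₂) finite). Set Z = 𝒜₂⁻¹W, i.e. z₁ = −A⁻¹w₁', z₂ = −A⁻¹w₂' + A⁻¹C₂₁A⁻¹w₁', z₁' = w₁, z₂' = w₂. Then there exist constants C₁, C₂ > 0 depending only on ‖A^{-1/2}‖ and ‖C₂₁‖ such that C₁( e₀(Z₁) + e₁(Z₂) ) ≤ e₋₁(W₁) + e₀(W₂) ≤ C₂( e₀(Z₁) + e₁(Z₂) ), where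 Zᵢ = (zᵢ, zᵢ'), Wᵢ = (wᵢ, wᵢ') and e_k(u,v) = ½(|A^{k/2}u|² + |A^{(k-1)/2}v|²). -/
/-- the `n = 2` norm-equivalence between the weakened energies of a
cascade solution `W = (w₁, w₂, w₁', w₂')` and of `Z = 𝒜₂⁻¹W`.  Here `S` plays the role
of `A^{-1/2}`, so `A⁻¹ = S²`, `z₁ = −A⁻¹w₁' = −S²w₁'`, `A^{1/2}z₂ = −Sw₂' + S C S² w₁'`,
`z₁' = w₁`, `z₂' = w₂`, and
`e₀(Z₁) = ½(‖S²w₁'‖² + ‖Sw₁‖²)`, `e₁(Z₂) = ½(‖−Sw₂' + SCS²w₁'‖² + ‖w₂‖²)`,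
`e₋₁(W₁) = ½(‖Sw₁‖² + ‖S²w₁'‖²)`, `e₀(W₂) = ½(‖w₂‖² + ‖Sw₂'‖²)`.
There exist `C₁, C₂ > 0` depending only on `‖A^{-1/2}‖` and `‖C₂₁‖` with
`C₁(e₀(Z₁) + e₁(Z₂)) ≤ e₋₁(W₁) + e₀(W₂) ≤ C₂(e₀(Z₁) + e₁(Z₂))`. -/
theorem stmt_14 {H : Type*} [NormedAddCommGroup H] [InnerProductSpace ℝ H]
    (S C21 : H →L[ℝ] H) :
    ∃ C₁ C₂ : ℝ, 0 < C₁ ∧ 0 < C₂ ∧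
      ∀ w₁ w₂ w₁' w₂' : H,
        C₁ * ((1 / 2) * (‖S (S w₁')‖ ^ 2 + ‖S w₁‖ ^ 2)
            + (1 / 2) * (‖-(S w₂') + S (C21 (S (S w₁')))‖ ^ 2 + ‖w₂‖ ^ 2)) ≤
          (1 / 2) * (‖S w₁‖ ^ 2 + ‖S (S w₁')‖ ^ 2)
            + (1 / 2) * (‖w₂‖ ^ 2 + ‖S w₂'‖ ^ 2) ∧
        (1 / 2) * (‖S w₁‖ ^ 2 + ‖S (S w₁')‖ ^ 2)
            + (1 / 2) * (‖w₂‖ ^ 2 + ‖S w₂'‖ ^ 2) ≤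
          C₂ * ((1 / 2) * (‖S (S w₁')‖ ^ 2 + ‖S w₁‖ ^ 2)
            + (1 / 2) * (‖-(S w₂') + S (C21 (S (S w₁')))‖ ^ 2 + ‖w₂‖ ^ 2)) := by

  set M := ‖S‖ * ‖C21‖ with hM
  have hM0 : 0 ≤ M := mul_nonneg (norm_nonneg _) (norm_nonneg _)
  refine ⟨1 / (2 + 2 * M ^ 2), 2 + 2 * M ^ 2, by positivity, by positivity, ?_⟩
  intro w₁ w₂ w₁' w₂'
  set a := ‖S (S w₁')‖ with ha
  set b := ‖S w₁‖ with hb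
  set c := ‖w₂‖ with hc
  set d := ‖S w₂'‖ with hd
  set u := S (C21 (S (S w₁'))) with hu'
  have hu : ‖u‖ ≤ M * a := by
    calc ‖u‖ ≤ ‖S‖ * ‖C21 (S (S w₁'))‖ := S.le_opNorm _
    _ ≤ ‖S‖ * (‖C21‖ * a) := by gcongr; exact C21.le_opNorm _
    _ = M * a := by ring
  set v := ‖-(S w₂') + u‖ with hv
  have h1 : v ≤ d + M * a := by
    refine le_trans (norm_add_le _ _) ?_
    rw [norm_neg]
    exact add_le_add le_rfl hu
  have h2 : d ≤ v + M * a := by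
    calc d = ‖u - (-(S w₂') + u)‖ := by rw [hd]; congr 1; abel
    _ ≤ ‖u‖ + v := norm_sub_le _ _
    _ ≤ M * a + v := add_le_add hu le_rfl
    _ = v + M * a := by ring
  have hv0 : 0 ≤ v := norm_nonneg _
  have hd0 : 0 ≤ d := norm_nonneg _
  have ha0 : 0 ≤ a := norm_nonneg _
  have hb0 : 0 ≤ b := norm_nonneg _
  have hc0 : 0 ≤ c := norm_nonneg _
  have hv2 : v ^ 2 ≤ 2 * d ^ 2 + 2 * (M * a) ^ 2 := by nlinarith [sq_nonneg (d - M * a), mul_nonneg hd0 (mul_nonneg hM0 ha0)]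
  have hd2 : d ^ 2 ≤ 2 * v ^ 2 + 2 * (M * a) ^ 2 := by nlinarith [sq_nonneg (v - M * a), mul_nonneg hv0 (mul_nonneg hM0 ha0)]
  clear_value M a b c d u v
  constructor
  · rw [div_mul_eq_mul_div, div_le_iff₀ (by positivity)]
    nlinarith [hv2, mul_nonneg (sq_nonneg M) (sq_nonneg b), mul_nonneg (sq_nonneg M) (sq_nonneg c), mul_nonneg (sq_nonneg M) (sq_nonneg d), sq_nonneg a, sq_nonneg b, sq_nonneg c, sq_nonneg d]
  · nlinarith [hd2, mul_nonneg (sq_nonneg M) (sq_nonneg b), mul_nonneg (sq_nonneg M) (sq_nonneg c), mul_nonneg (sq_nonneg M) (sq_nonneg v), sq_nonneg a, sq_nonneg b, sq_nonneg c, sq_nonneg v]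
end

section
/- Let E : [0,T] → [0,∞) be C¹ with E' = −g where g is continuous and, by Cauchy–Schwarz, |g(t)| ≤ √(βX'(t))·√(2E(t)) for a nonnegative continuous X' with ∫₀ᵀ X'(t)dt = X and β > 0 (i.e. g(t) = ⟨Cu(t), v(t)⟩ with |Cu|² ≤ βX'-type bound and |v|² ≤ 2E). Then for every ν > 0: (1+ν)∫₀ᵀ E(t) dt ≥ T·E(0) − (βT²/(2ν))·X. -/
/-!
Integrating `E' = -g` gives `E t ≥ E 0 - ∫₀ᵀ |g|` on `[0,T]`, and integrating once more
`T (E 0 - ∫₀ᵀ |g|) ≤ ∫₀ᵀ E`. Young's inequality `√a √(2b) ≤ a/(2ε) + ε b` with `ε = ν/T`,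
applied pointwise to the bound on `|g|` and integrated, gives
`∫₀ᵀ |g| ≤ β T X/(2ν) + (ν/T) ∫₀ᵀ E`, which absorbs the remaining `E`-term.
-/

open MeasureTheory intervalIntegral Set

theorem sqrt_mul_sqrt_two_mul_le {a b ε : ℝ} (ha : 0 ≤ a) (hb : 0 ≤ b) (hε : 0 < ε) :
    √a * √(2 * b) ≤ a / (2 * ε) + ε * b := by
  have hsq : (√a - ε * √(2 * b)) ^ 2 = a + 2 * ε ^ 2 * b - 2 * ε * (√a * √(2 * b)) := by
    rw [sub_sq, mul_pow, Real.sq_sqrt ha, Real.sq_sqrt (by positivity)]; ring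
  rw [div_add' _ _ _ (by positivity), le_div_iff₀ (by positivity)]
  nlinarith [sq_nonneg (√a - ε * √(2 * b))]

theorem sub_integral_abs_le_of_hasDerivAt {E f : ℝ → ℝ} {a b t : ℝ} (hf : Continuous f)
    (hE : ∀ s ∈ Icc a b, HasDerivAt E (f s) s) (ht : t ∈ Icc a b) :
    E a - ∫ s in a..b, |f s| ≤ E t := by
  obtain ⟨hat, htb⟩ := ht
  have hftc : ∫ s in a..t, f s = E t - E a :=
    integral_eq_sub_of_hasDerivAt (fun s hs => hE s (by
      rw [uIcc_of_le hat] at hs; exact ⟨hs.1, hs.2.trans htb⟩)) (hf.intervalIntegrable a t)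
  have hle_abs : -∫ s in a..t, |f s| ≤ ∫ s in a..t, f s :=
    neg_le_of_abs_le (abs_integral_le_integral_abs hat)
  have hsplit : ∫ s in a..t, |f s| ≤ ∫ s in a..b, |f s| := by
    rw [← integral_add_adjacent_intervals (hf.abs.intervalIntegrable a t)
      (hf.abs.intervalIntegrable t b)]
    linarith [integral_nonneg (μ := volume) htb fun s _ => abs_nonneg (f s)]
  linarith

theorem integral_abs_le_of_abs_le_sqrt_mul_sqrt {g u w : ℝ → ℝ} {a b ε : ℝ} (hab : a ≤ b)
    (hg : IntervalIntegrable g volume a b) (hu : IntervalIntegrable u volume a b)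
    (hw : IntervalIntegrable w volume a b) (hu0 : ∀ t ∈ Icc a b, 0 ≤ u t)
    (hw0 : ∀ t ∈ Icc a b, 0 ≤ w t) (hε : 0 < ε)
    (hbound : ∀ t ∈ Icc a b, |g t| ≤ √(u t) * √(2 * w t)) :
    ∫ t in a..b, |g t| ≤ (∫ t in a..b, u t) / (2 * ε) + ε * ∫ t in a..b, w t := by
  rw [← intervalIntegral.integral_div, ← intervalIntegral.integral_const_mul,
    ← intervalIntegral.integral_add (hu.div_const _) (hw.const_mul _)]
  exact integral_mono_on hab hg.abs ((hu.div_const _).add (hw.const_mul _)) fun t ht =>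
    (hbound t ht).trans (sqrt_mul_sqrt_two_mul_le (hu0 t ht) (hw0 t ht) hε)

/-- the double-integration estimate of Lemma PROP4: if `E ≥ 0` is `C¹`
on `[0,T]` with `E' = −g`, `|g(t)| ≤ √(β X'(t))·√(2 E(t))`, `X' ≥ 0` continuous with
`∫₀ᵀ X' = X`, then for every `ν > 0`,
`(1+ν)∫₀ᵀ E ≥ T·E(0) − (βT²/(2ν))·X`. -/
theorem stmt_19 (T β X : ℝ) (E g X' : ℝ → ℝ)
    (hT : 0 < T) (hβ : 0 < β)
    (hgc : Continuous g) (hE : ∀ t, HasDerivAt E (-(g t)) t)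
    (hEnn : ∀ t ∈ Set.Icc 0 T, 0 ≤ E t)
    (hX'c : Continuous X') (hX'nn : ∀ t ∈ Set.Icc 0 T, 0 ≤ X' t)
    (hXdef : (∫ t in (0:ℝ)..T, X' t) = X)
    (hbound : ∀ t ∈ Set.Icc 0 T, |g t| ≤ Real.sqrt (β * X' t) * Real.sqrt (2 * E t)) :
    ∀ ν > (0:ℝ),
      (1 + ν) * ∫ t in (0:ℝ)..T, E t ≥ T * E 0 - (β * T ^ 2 / (2 * ν)) * X := by
  intro ν hν
  have hEc : Continuous E := continuous_iff_continuousAt.2 fun t => (hE t).continuousAt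
  set I := ∫ t in (0:ℝ)..T, |g t|
  have hlow : T * (E 0 - I) ≤ ∫ t in (0:ℝ)..T, E t := by
    have hpt (t : ℝ) (ht : t ∈ Icc 0 T) : E 0 - I ≤ E t := by
      simpa only [abs_neg] using
        sub_integral_abs_le_of_hasDerivAt (f := fun s => -g s) hgc.neg (fun s _ => hE s) ht
    have := integral_mono_on hT.le (intervalIntegrable_const (μ := volume))
      (hEc.intervalIntegrable 0 T) hpt
    rwa [intervalIntegral.integral_const, smul_eq_mul, sub_zero] at this
  have hyoung : I ≤ β * X / (2 * (ν / T)) + ν / T * ∫ t in (0:ℝ)..T, E t := by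
    have := integral_abs_le_of_abs_le_sqrt_mul_sqrt hT.le (hgc.intervalIntegrable 0 T)
      ((hX'c.intervalIntegrable 0 T).const_mul β) (hEc.intervalIntegrable 0 T)
      (fun t ht => mul_nonneg hβ.le (hX'nn t ht)) hEnn (div_pos hν hT) hbound
    rwa [intervalIntegral.integral_const_mul, hXdef] at this
  have hTI : T * I ≤ β * T ^ 2 / (2 * ν) * X + ν * ∫ t in (0:ℝ)..T, E t := by
    calc T * I ≤ T * (β * X / (2 * (ν / T)) + ν / T * ∫ t in (0:ℝ)..T, E t) :=
          mul_le_mul_of_nonneg_left hyoung hT.le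
      _ = β * T ^ 2 / (2 * ν) * X + ν * ∫ t in (0:ℝ)..T, E t := by field_simp
  linarith
end
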